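/- arXiv:2506.02985 — 3 statements merged into one kernel-verified Lean document; each statement's English description precedes it below -/
import Mathlib

section
/- For integers n ≥ 2 and 0 ≤ t ≤ n-2, the number of inversion sequences of length n avoiding both 102 and 012 with rank t equals (t+1) · F_{2n-2t-3}, where F_k is the k-th Fibonacci number. -/
/-- An inversion sequence of length `n`, 1-indexed: `0 ≤ e i ≤ i - 1` for `1 ≤ i ≤ n`,
normalized to be `0` outside `[1, n]`. -/
def IsInvSeq (n : ℕ) (e : ℕ → ℕ) : Prop :=
  e 0 = 0 ∧ (∀ i, 1 ≤ i → i ≤ n → e i < i) ∧ ∀ i, n < i → e i = 0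

/-- `e` contains a length-3 pattern described by the relation `P` on values. -/
def Contains (n : ℕ) (P : ℕ → ℕ → ℕ → Prop) (e : ℕ → ℕ) : Prop :=
  ∃ i j k, 1 ≤ i ∧ i < j ∧ j < k ∧ k ≤ n ∧ P (e i) (e j) (e k)

def Pat102 (a b c : ℕ) : Prop := b < a ∧ a < c
def Pat001 (a b c : ℕ) : Prop := a = b ∧ b < c
def Pat011 (a b c : ℕ) : Prop := a < b ∧ b = c
def Pat012 (a b c : ℕ) : Prop := a < b ∧ b < c
def Pat021 (a b c : ℕ) : Prop := a < c ∧ c < b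
def Pat110 (a b c : ℕ) : Prop := a = b ∧ c < b
def Pat120 (a b c : ℕ) : Prop := c < a ∧ a < b
def Pat201 (a b c : ℕ) : Prop := b < c ∧ c < a
def Pat210 (a b c : ℕ) : Prop := c < b ∧ b < a
def Pat101 (a b c : ℕ) : Prop := a = c ∧ b < a

/-- `p` is the position of the first descent of `e` (with convention `e (n+1) = -1`,
i.e. there is always a descent at position `n`). -/
def PrMax (n : ℕ) (e : ℕ → ℕ) (p : ℕ) : Prop :=
  1 ≤ p ∧ p ≤ n ∧ (∀ i, 1 ≤ i → i < p → e i ≤ e (i + 1)) ∧ (p = n ∨ e (p + 1) < e p)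

/-- `e` has rank `t`, i.e. `t = prmax e - max e - 1`. -/
def HasRank (n : ℕ) (e : ℕ → ℕ) (t : ℕ) : Prop :=
  ∃ p, PrMax n e p ∧ p = e p + t + 1

/-- `m` is the maximum value of `e` on `[1, n]`. -/
def IsMaxVal (n : ℕ) (e : ℕ → ℕ) (m : ℕ) : Prop :=
  (∀ i, 1 ≤ i → i ≤ n → e i ≤ m) ∧ ∃ i, 1 ≤ i ∧ i ≤ n ∧ e i = m

/-!
Since `e 1 = 0`, avoiding `012` says that every nonzero entry dominates all later entries, and
this already forces `102` to be avoided. Up to its first descent `p` the sequence is weakly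
increasing, hence of the form `0, …, 0, m, …, m` with `m = e p`; the rank condition reads
`p = m + t + 1`, the last zero `j` can be any of the `t + 1` positions `m, …, m + t`, and the tail
after `p` is a list of length `n - p` with entries at most `m`, nonzero entries weakly decreasing
and first entry below `m`. Let `D s` count all such lists (dropping the condition on the first
entry) with `m + (n - p) = s`; splitting off the first entry gives `D s = F (2 s) + 1`. The lists
starting with `m` are `m` followed by a list counted in `D (s - 1)`, so for `s = n - t - 1` the
tails number `F (2 s) - F (2 s - 2) = F (2 s - 1)`.
-/

open Finset

def IsTailList (b : ℕ) (l : List ℕ) : Prop :=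
  (∀ x ∈ l, x ≤ b) ∧ l.Pairwise fun a c => a = 0 ∨ c ≤ a

lemma isTailList_nil (b : ℕ) : IsTailList b [] := ⟨by simp, .nil⟩

lemma isTailList_cons {b v : ℕ} {l : List ℕ} :
    IsTailList b (v :: l) ↔ v ≤ b ∧ IsTailList (if v = 0 then b else v) l := by
  simp only [IsTailList, List.mem_cons, forall_eq_or_imp, List.pairwise_cons]
  split_ifs with hv
  · subst hv
    simp
  · constructor
    · rintro ⟨⟨hvb, -⟩, hl, hpw⟩
      exact ⟨hvb, fun x hx => (hl x hx).resolve_left hv, hpw⟩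
    · rintro ⟨hvb, hl, hpw⟩
      exact ⟨⟨hvb, fun x hx => (hl x hx).trans hvb⟩, fun x hx => .inr (hl x hx), hpw⟩

lemma IsTailList.getD_le {b : ℕ} {l : List ℕ} (hl : IsTailList b l) (d : ℕ) :
    l.getD d 0 ≤ b := by
  rcases lt_or_ge d l.length with hd | hd
  · rw [List.getD_eq_getElem _ _ hd]
    exact hl.1 _ (List.getElem_mem hd)
  · rw [List.getD_eq_default _ _ hd]
    exact Nat.zero_le b

lemma IsTailList.getD_eq_zero_or_le {b : ℕ} {l : List ℕ} (hl : IsTailList b l) {d d' : ℕ}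
    (hdd' : d < d') :
    l.getD d 0 = 0 ∨ l.getD d' 0 ≤ l.getD d 0 := by
  rcases lt_or_ge d' l.length with hd' | hd'
  · rw [List.getD_eq_getElem _ _ hd', List.getD_eq_getElem _ _ (hdd'.trans hd')]
    exact List.pairwise_iff_getElem.1 hl.2 d d' _ hd' hdd'
  · rw [List.getD_eq_default _ _ hd']
    exact .inr (Nat.zero_le _)

def tailLists : ℕ → ℕ → Finset (List ℕ)
  | 0, _ => {[]}
  | q + 1, b =>
    (range (b + 1)).biUnion fun v => (tailLists q (if v = 0 then b else v)).image (v :: ·)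

lemma mem_tailLists {q b : ℕ} {l : List ℕ} :
    l ∈ tailLists q b ↔ l.length = q ∧ IsTailList b l := by
  induction q generalizing b l with
  | zero =>
    simp only [tailLists, mem_singleton, List.length_eq_zero_iff, iff_self_and]
    rintro rfl
    exact isTailList_nil b
  | succ q ih =>
    cases l with
    | nil => simp [tailLists]
    | cons v l =>
      simp only [tailLists, mem_biUnion, mem_range, Order.lt_add_one_iff, mem_image, ih,
        List.cons.injEq, exists_eq_right_right, List.length_cons, Nat.add_right_cancel_iff,
        isTailList_cons]
      tauto

lemma card_tailLists_succ (q b : ℕ) :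
    #(tailLists (q + 1) b) = #(tailLists q b) + ∑ v ∈ range b, #(tailLists q (v + 1)) := by
  rw [tailLists, card_biUnion, sum_range_succ']
  · simp [card_image_of_injective _ List.cons_injective, add_comm]
  · intro v _ w _ hvw
    simp only [Function.onFun, disjoint_left, mem_image]
    rintro _ ⟨l, -, rfl⟩ ⟨l', -, h⟩
    exact hvw (List.cons_eq_cons.1 h).1.symm

lemma card_tailLists_zero_right (q : ℕ) : #(tailLists q 0) = 1 := by
  induction q with
  | zero => rfl
  | succ q ih => simp [card_tailLists_succ, ih]

def descTailLists (q m : ℕ) : Finset (List ℕ) :=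
  (tailLists q m).filter fun l => l.headD 0 < m

lemma card_descTailLists_add (q m : ℕ) :
    #(descTailLists (q + 1) m) + #(tailLists q m) = #(tailLists (q + 1) m) := by
  have hhead : (tailLists (q + 1) m).filter (fun l => ¬ l.headD 0 < m) =
      (tailLists q m).image (m :: ·) := by
    ext l
    simp only [tailLists, mem_filter, mem_biUnion, mem_image, mem_range, not_lt]
    constructor
    · rintro ⟨⟨v, hv, l', hl', rfl⟩, hmv⟩
      obtain rfl : v = m := by simp only [List.headD_cons] at hmv; omega
      exact ⟨l', by simpa using hl', rfl⟩
    · rintro ⟨l', hl', rfl⟩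
      exact ⟨⟨m, by omega, l', by simpa using hl', rfl⟩, by simp⟩
  rw [descTailLists, ← card_filter_add_card_filter_not (s := tailLists (q + 1) m)
    (fun l => l.headD 0 < m), hhead, card_image_of_injective _ List.cons_injective]

def tailDiagCard (s : ℕ) : ℕ := ∑ x ∈ antidiagonal s, #(tailLists x.2 x.1)

def tailDiagCumulCard (s : ℕ) : ℕ :=
  ∑ x ∈ antidiagonal s, ∑ v ∈ range x.1, #(tailLists x.2 (v + 1))

lemma tailDiagCard_succ (s : ℕ) :
    tailDiagCard (s + 1) = 1 + tailDiagCard s + tailDiagCumulCard s := by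
  simp only [tailDiagCard, tailDiagCumulCard, Nat.sum_antidiagonal_succ', card_tailLists_succ,
    sum_add_distrib]
  simp [tailLists, add_assoc]

lemma tailDiagCard_succ' (s : ℕ) :
    tailDiagCard (s + 1) = 1 + ∑ x ∈ antidiagonal s, #(tailLists x.2 (x.1 + 1)) := by
  rw [tailDiagCard, Nat.sum_antidiagonal_succ, card_tailLists_zero_right]

lemma tailDiagCumulCard_succ (s : ℕ) :
    tailDiagCumulCard (s + 1) + 1 = tailDiagCumulCard s + tailDiagCard (s + 1) := by
  rw [tailDiagCard_succ', tailDiagCumulCard, Nat.sum_antidiagonal_succ, tailDiagCumulCard]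
  simp only [sum_range_succ, sum_add_distrib, range_zero, sum_empty, zero_add]
  omega

lemma tailDiagCard_eq_fib (s : ℕ) :
    tailDiagCard s = Nat.fib (2 * s) + 1 ∧ tailDiagCumulCard s + 1 = Nat.fib (2 * s + 1) := by
  induction s with
  | zero => simp [tailDiagCard, tailDiagCumulCard, tailLists]
  | succ s ih =>
    have hfib₁ : Nat.fib (2 * (s + 1)) = Nat.fib (2 * s) + Nat.fib (2 * s + 1) := Nat.fib_add_two
    have hfib₂ : Nat.fib (2 * (s + 1) + 1) = Nat.fib (2 * s + 1) + Nat.fib (2 * (s + 1)) :=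
      Nat.fib_add_two
    have hD : tailDiagCard (s + 1) = Nat.fib (2 * (s + 1)) + 1 := by
      rw [tailDiagCard_succ]
      omega
    have := tailDiagCumulCard_succ s
    exact ⟨hD, by omega⟩

lemma sum_card_descTailLists (s : ℕ) :
    ∑ x ∈ antidiagonal (s + 1), #(descTailLists x.2 x.1) = Nat.fib (2 * s + 1) := by
  have hstep : ∑ x ∈ antidiagonal (s + 1), #(descTailLists x.2 x.1) + tailDiagCard s =
      tailDiagCard (s + 1) := by
    rw [Nat.sum_antidiagonal_succ', tailDiagCard, tailDiagCard, Nat.sum_antidiagonal_succ',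
      add_assoc, ← sum_add_distrib, sum_congr rfl fun x _ => card_descTailLists_add x.2 x.1]
    simp [descTailLists, tailLists, filter_singleton]
  have hfib : Nat.fib (2 * (s + 1)) = Nat.fib (2 * s) + Nat.fib (2 * s + 1) := Nat.fib_add_two
  have := (tailDiagCard_eq_fib s).1
  have := (tailDiagCard_eq_fib (s + 1)).1
  omega

def NoRise (n : ℕ) (e : ℕ → ℕ) : Prop :=
  ∀ i k, 1 ≤ i → i < k → k ≤ n → e i = 0 ∨ e k ≤ e i

section Patterns

variable {n : ℕ} {e : ℕ → ℕ}

lemma not_contains_012_iff_noRise (h1 : e 1 = 0) : ¬ Contains n Pat012 e ↔ NoRise n e := by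
  constructor
  · intro h i k hi hik hk
    by_contra! hrise
    have : i ≠ 1 := fun hi1 => hrise.1 (hi1 ▸ h1)
    exact h ⟨1, i, k, le_rfl, by omega, hik, hk, by omega, hrise.2⟩
  · rintro hr ⟨a, b, c, ha, hab, hbc, hc, h₁, h₂⟩
    rcases hr b c (by omega) hbc hc with h | h <;> omega

lemma NoRise.not_contains_102 (hr : NoRise n e) : ¬ Contains n Pat102 e := by
  rintro ⟨a, b, c, ha, hab, hbc, hc, h₁, h₂⟩
  rcases hr a c ha (by omega) hc with h | h <;> omega

end Patterns

namespace PrMax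

variable {n p p' : ℕ} {e : ℕ → ℕ}

lemma le_of_le (hp : PrMax n e p) {i k : ℕ} (hi : 1 ≤ i) (hik : i ≤ k) (hk : k ≤ p) :
    e i ≤ e k := by
  induction k, hik using Nat.le_induction with
  | base => exact le_rfl
  | succ k hik ih => exact (ih (by omega)).trans (hp.2.2.1 k (by omega) (by omega))

lemma le (hp : PrMax n e p) (hp' : PrMax n e p') : p ≤ p' := by
  by_contra! hlt
  have hdesc : e (p' + 1) < e p' := hp'.2.2.2.resolve_left (by have := hp.2.1; omega)
  have := hp.2.2.1 p' hp'.1 hlt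
  omega

lemma unique (hp : PrMax n e p) (hp' : PrMax n e p') : p = p' :=
  le_antisymm (hp.le hp') (hp'.le hp)

end PrMax

def seqOf (p j m : ℕ) (l : List ℕ) (i : ℕ) : ℕ :=
  if i ≤ j then 0 else if i ≤ p then m else l.getD (i - p - 1) 0

def tailOf (n p : ℕ) (e : ℕ → ℕ) : List ℕ :=
  (List.range (n - p)).map fun d => e (p + 1 + d)

section SeqOf

variable {n p j m : ℕ} {l : List ℕ}

lemma seqOf_le (hl : IsTailList m l) (i : ℕ) : seqOf p j m l i ≤ m := by
  unfold seqOf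
  split_ifs
  · exact Nat.zero_le m
  · exact le_rfl
  · exact hl.getD_le _

lemma isInvSeq_seqOf (hmj : m ≤ j) (hpn : p ≤ n) (hl : IsTailList m l)
    (hlen : l.length = n - p) :
    IsInvSeq n (seqOf p j m l) := by
  refine ⟨if_pos (Nat.zero_le j), fun i hi _ => ?_, fun i hi => ?_⟩
  · by_cases hij : i ≤ j
    · rw [seqOf, if_pos hij]
      exact hi
    · exact (seqOf_le hl i).trans_lt (by omega)
  · unfold seqOf
    split_ifs
    · rfl
    · omega
    · exact List.getD_eq_default _ _ (by omega)

lemma noRise_seqOf (hl : IsTailList m l) : NoRise n (seqOf p j m l) := by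
  intro i k _ hik _
  by_cases hij : i ≤ j
  · exact .inl (if_pos hij)
  by_cases hip : i ≤ p
  · rw [seqOf, if_neg hij, if_pos hip]
    exact .inr (seqOf_le hl k)
  · rw [seqOf, if_neg hij, if_neg hip, seqOf, if_neg (by omega), if_neg (by omega)]
    exact hl.getD_eq_zero_or_le (by omega)

lemma prMax_seqOf (hjp : j < p) (hpn : p ≤ n) (hhead : l.headD 0 < m) :
    PrMax n (seqOf p j m l) p := by
  refine ⟨by omega, hpn, fun i _ hi => ?_, ?_⟩
  · unfold seqOf
    split_ifs <;> omega
  · rcases hpn.eq_or_lt with hpn | hpn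
    · exact .inl hpn
    · right
      rw [seqOf, if_neg (by omega), if_neg (by omega), seqOf, if_neg (by omega), if_pos le_rfl]
      rwa [show p + 1 - p - 1 = 0 by omega, ← List.headD_eq_getD]

lemma findGreatest_seqOf (hm : m ≠ 0) (hjp : j ≤ p) :
    Nat.findGreatest (fun i => seqOf p j m l i = 0) p = j := by
  rw [Nat.findGreatest_eq_iff]
  refine ⟨hjp, fun _ => if_pos le_rfl, fun i hji hip => ?_⟩
  rw [seqOf, if_neg (by omega), if_pos hip]
  exact hm

lemma tailOf_seqOf (hjp : j ≤ p) (hlen : l.length = n - p) : tailOf n p (seqOf p j m l) = l := by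
  refine List.ext_getElem (by simp [tailOf, hlen]) fun d hd _ => ?_
  simp only [tailOf, List.getElem_map, List.getElem_range]
  rw [seqOf, if_neg (by omega), if_neg (by omega), show p + 1 + d - p - 1 = d by omega,
    List.getD_eq_getElem]

end SeqOf

lemma IsInvSeq.apply_one {n : ℕ} {e : ℕ → ℕ} (he : IsInvSeq n e) (hn : 1 ≤ n) : e 1 = 0 :=
  Nat.lt_one_iff.1 (he.2.1 1 le_rfl hn)

section Structure

variable {n p : ℕ} {e : ℕ → ℕ}

lemma length_tailOf : (tailOf n p e).length = n - p := by
  simp [tailOf]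

lemma getD_tailOf {d : ℕ} (hd : p + 1 + d ≤ n) : (tailOf n p e).getD d 0 = e (p + 1 + d) := by
  rw [List.getD_eq_getElem _ _ (by rw [length_tailOf]; omega)]
  simp [tailOf]

lemma isTailList_tailOf (hr : NoRise n e) (hp : 1 ≤ p) (hm : e p ≠ 0) :
    IsTailList (e p) (tailOf n p e) := by
  refine ⟨?_, List.pairwise_iff_getElem.2 fun d d' hd hd' hdd' => ?_⟩
  · simp only [tailOf, List.mem_map, List.mem_range]
    rintro _ ⟨d, hd, rfl⟩
    exact (hr p _ hp (by omega) (by omega)).resolve_left hm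
  · rw [length_tailOf] at hd hd'
    simp only [tailOf, List.getElem_map, List.getElem_range]
    exact hr _ _ (by omega) (by omega) (by omega)

lemma PrMax.headD_tailOf_lt (hp : PrMax n e p) (hm : e p ≠ 0) :
    (tailOf n p e).headD 0 < e p := by
  rw [List.headD_eq_getD]
  rcases hp.2.1.eq_or_lt with rfl | hpn
  · rw [List.getD_eq_default _ _ (by rw [length_tailOf]; omega)]
    omega
  · rw [getD_tailOf hpn]
    exact hp.2.2.2.resolve_left hpn.ne

lemma eq_seqOf (he : IsInvSeq n e) (hr : NoRise n e) (hp : PrMax n e p) (hm : e p ≠ 0) :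
    e = seqOf p (Nat.findGreatest (e · = 0) p) (e p) (tailOf n p e) := by
  set j := Nat.findGreatest (e · = 0) p
  have hj : e j = 0 :=
    Nat.findGreatest_spec (P := (e · = 0)) hp.1 (he.apply_one (hp.1.trans hp.2.1))
  have hjp : j ≤ p := Nat.findGreatest_le p
  funext i
  unfold seqOf
  split_ifs with hij hip
  · rcases Nat.eq_zero_or_pos i with rfl | hi
    · exact he.1
    · have := hp.le_of_le hi hij hjp
      omega
  · have hi0 : e i ≠ 0 := Nat.findGreatest_is_greatest (P := (e · = 0)) (by omega) hip
    have hip' := hp.le_of_le (by omega) hip le_rfl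
    rcases hip.lt_or_eq with hip | rfl
    · have := (hr i p (by omega) hip hp.2.1).resolve_left hi0
      omega
    · rfl
  · rcases le_or_gt i n with hin | hin
    · rw [getD_tailOf (by omega), show p + 1 + (i - p - 1) = i by omega]
    · rw [he.2.2 i hin, List.getD_eq_default _ _ (by rw [length_tailOf]; omega)]

end Structure

/-- `⟨(m, q), (j, l)⟩` encodes `seqOf (m + t + 1) j m l`: `m` is the value at the first descent,
`q` the length of the tail after it, `j` the position of the last zero. -/
def params (n t : ℕ) : Finset (Σ _ : ℕ × ℕ, ℕ × List ℕ) :=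
  (antidiagonal (n - t - 1)).sigma fun x => Icc x.1 (x.1 + t) ×ˢ descTailLists x.2 x.1

def seqOfParams (t : ℕ) (x : Σ _ : ℕ × ℕ, ℕ × List ℕ) : ℕ → ℕ :=
  seqOf (x.1.1 + t + 1) x.2.1 x.1.1 x.2.2

section Params

variable {n t : ℕ}

lemma mem_params {m q j : ℕ} {l : List ℕ} :
    (⟨(m, q), (j, l)⟩ : Σ _ : ℕ × ℕ, ℕ × List ℕ) ∈ params n t ↔
      m + q = n - t - 1 ∧ (m ≤ j ∧ j ≤ m + t) ∧ l.length = q ∧ IsTailList m l ∧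
        l.headD 0 < m := by
  simp [params, descTailLists, mem_tailLists, and_assoc]

lemma card_params (h : t + 2 ≤ n) : #(params n t) = (t + 1) * Nat.fib (2 * n - 2 * t - 3) := by
  rw [params, card_sigma]
  simp only [card_product, Nat.card_Icc, show ∀ m, m + t + 1 - m = t + 1 by omega]
  rw [← mul_sum, show n - t - 1 = n - t - 2 + 1 by omega, sum_card_descTailLists,
    show 2 * (n - t - 2) + 1 = 2 * n - 2 * t - 3 by omega]

lemma seqOfParams_mem {x : Σ _ : ℕ × ℕ, ℕ × List ℕ} (hx : x ∈ params n t) :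
    IsInvSeq n (seqOfParams t x) ∧ ¬ Contains n Pat102 (seqOfParams t x) ∧
      ¬ Contains n Pat012 (seqOfParams t x) ∧ HasRank n (seqOfParams t x) t := by
  obtain ⟨⟨m, q⟩, j, l⟩ := x
  obtain ⟨hmq, ⟨hmj, hjt⟩, hlen, hl, hhead⟩ := mem_params.1 hx
  dsimp only [seqOfParams]
  have he : IsInvSeq n (seqOf (m + t + 1) j m l) := isInvSeq_seqOf hmj (by omega) hl (by omega)
  have hr : NoRise n (seqOf (m + t + 1) j m l) := noRise_seqOf hl
  refine ⟨he, hr.not_contains_102, (not_contains_012_iff_noRise (he.apply_one (by omega))).2 hr,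
    m + t + 1, prMax_seqOf (by omega) (by omega) hhead, ?_⟩
  rw [seqOf, if_neg (by omega), if_pos le_rfl]

lemma exists_mem_params (h : t + 2 ≤ n) {e : ℕ → ℕ} (he : IsInvSeq n e)
    (h012 : ¬ Contains n Pat012 e) (hrank : HasRank n e t) :
    ∃ x ∈ params n t, seqOfParams t x = e := by
  obtain ⟨p, hp, hpt⟩ := hrank
  have hpn := hp.2.1
  have hr := (not_contains_012_iff_noRise (he.apply_one (by omega))).1 h012
  have hm : e p ≠ 0 := fun hm => by
    have := hp.2.2.2.resolve_left (by omega)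
    omega
  have heq := eq_seqOf he hr hp hm
  set j := Nat.findGreatest (e · = 0) p
  have hjp : j < p := by
    refine (Nat.findGreatest_le p).lt_of_ne fun hjp => hm ?_
    rw [congrFun heq p, seqOf, if_pos hjp.ge]
  have hmj : e p ≤ j := by
    have := he.2.1 (j + 1) (by omega) (by omega)
    rw [congrFun heq (j + 1), seqOf, if_neg (by omega), if_pos (by omega)] at this
    omega
  refine ⟨⟨(e p, n - p), (j, tailOf n p e)⟩, mem_params.2 ⟨by omega, ⟨hmj, by omega⟩,
    length_tailOf, isTailList_tailOf hr hp.1 hm, hp.headD_tailOf_lt hm⟩, ?_⟩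
  rw [seqOfParams, ← hpt]
  exact heq.symm

lemma injOn_seqOfParams : Set.InjOn (seqOfParams t) (params n t) := by
  rintro ⟨⟨m, q⟩, j, l⟩ hx ⟨⟨m', q'⟩, j', l'⟩ hy heq
  obtain ⟨hmq, ⟨hmj, hjt⟩, hlen, -, hhead⟩ := mem_params.1 hx
  obtain ⟨hmq', ⟨hmj', hjt'⟩, hlen', -, hhead'⟩ := mem_params.1 hy
  simp only [seqOfParams] at heq
  have hp := prMax_seqOf (n := n) (by omega : j < m + t + 1) (by omega) hhead
  have hp' := prMax_seqOf (n := n) (by omega : j' < m' + t + 1) (by omega) hhead'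
  rw [heq] at hp
  obtain rfl : m = m' := by
    have := hp.unique hp'
    omega
  obtain rfl : q = q' := by omega
  obtain rfl : j = j' := by
    rw [← findGreatest_seqOf (l := l) (by omega : m ≠ 0) (by omega : j ≤ m + t + 1), heq,
      findGreatest_seqOf (by omega) (by omega)]
  obtain rfl : l = l' := by
    rw [← tailOf_seqOf (n := n) (m := m) (by omega : j ≤ m + t + 1) (by omega : l.length = _),
      heq, tailOf_seqOf (by omega) (by omega)]
  rfl

end Params

theorem stmt4 (n t : ℕ) (hn : 2 ≤ n) (ht : t ≤ n - 2) :
    {e : ℕ → ℕ | IsInvSeq n e ∧ ¬ Contains n Pat102 e ∧ ¬ Contains n Pat012 e ∧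
      HasRank n e t}.ncard = (t + 1) * Nat.fib (2 * n - 2 * t - 3) := by
  have hS : {e : ℕ → ℕ | IsInvSeq n e ∧ ¬ Contains n Pat102 e ∧
      ¬ Contains n Pat012 e ∧ HasRank n e t} = seqOfParams t '' params n t := by
    ext e
    constructor
    · rintro ⟨he, -, h012, hrank⟩
      exact exists_mem_params (by omega) he h012 hrank
    · rintro ⟨x, hx, rfl⟩
      exact seqOfParams_mem hx
  rw [hS, injOn_seqOfParams.ncard_image, Set.ncard_coe_finset, card_params (by omega)]
end

section
/- For positive integers k ≤ n, the number of Dyck paths of semilength n with exactly k returns (down steps touching the x-axis) equals (k/n) · C(2n-k-1, n-1). -/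
/-- Number of up steps (`true`) in a list of steps. -/
def upCount (L : List Bool) : ℕ := (L.filter id).length

/-- A Dyck path of semilength `n`: `2n` steps (`true` = up, `false` = down),
`n` up steps, every prefix has at least as many ups as downs. -/
def IsDyck (n : ℕ) (L : List Bool) : Prop :=
  L.length = 2 * n ∧ upCount L = n ∧ ∀ k, k ≤ L.length → k ≤ 2 * upCount (L.take k)

/-- The number of returns: down steps ending on the x-axis. -/
def returns (L : List Bool) : ℕ :=
  ((List.range L.length).filter
    (fun j => L.getD j true = false ∧ 2 * upCount (L.take (j + 1)) = j + 1)).length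

/-!
Cutting a Dyck path at its returns and removing the first and last step of each arch identifies
the Dyck paths of semilength `s + k` with `k` returns with the `k`-tuples of Dyck paths of total
semilength `s`. Let `T(k, s)` be the number of such tuples. The first entry of a tuple is either
empty or, by its first-return decomposition, of the form `p.nest + q` for a unique pair `(p, q)`;
hence `T(k + 1, s + 1) = T(k, s + 1) + T(k + 2, s)`. The ballot numbers
`C(2s + k, s) - C(2s + k, s + k + 1)` satisfy the same recursion by Pascal's rule and agree with
`T(k + 1, s)` at `s = 0`, which gives `(s + k + 1) T(k + 1, s) = (k + 1) C(2s + k, s + k)`.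
-/

open DyckStep

lemma upCount_eq_count_true (L : List Bool) : upCount L = L.count true := by
  simp [upCount, List.count_eq_length_filter, Function.id_def]

lemma upCount_append (A B : List Bool) : upCount (A ++ B) = upCount A + upCount B := by
  simp [upCount_eq_count_true]

lemma isDyck_iff_count (n : ℕ) (L : List Bool) :
    IsDyck n L ↔ L.count true = n ∧ L.count false = n ∧
      ∀ i, (L.take i).count false ≤ (L.take i).count true := by
  have hlen (M : List Bool) : M.length = M.count true + M.count false :=
    (List.count_true_add_count_false M).symm
  simp only [IsDyck, upCount_eq_count_true]
  constructor
  · rintro ⟨hl, hu, hp⟩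
    refine ⟨hu, by grind, fun i => ?_⟩
    rcases le_or_gt i L.length with hi | hi
    · have := hp i hi
      grind [List.length_take]
    · grind [List.take_of_length_le]
  · rintro ⟨hu, hd, hp⟩
    refine ⟨by grind, hu, fun i hi => ?_⟩
    have := hp i
    grind [List.length_take]

lemma IsDyck.two_mul_upCount {n : ℕ} {L : List Bool} (h : IsDyck n L) :
    2 * upCount L = L.length := by
  rw [h.1, h.2.1]

lemma returns_eq_countP (L : List Bool) : returns L = (List.range L.length).countP
    (fun j => L.getD j true = false ∧ 2 * upCount (L.take (j + 1)) = j + 1) :=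
  (List.countP_eq_length_filter ..).symm

lemma returns_append_eq_add_countP (A B : List Bool) :
    returns (A ++ B) = returns A + (List.range B.length).countP (fun j =>
      B.getD j true = false ∧ 2 * (upCount A + upCount (B.take (j + 1))) = A.length + j + 1) := by
  simp only [returns_eq_countP, List.length_append, List.range_add, List.countP_append,
    List.countP_map]
  congr 1
  · refine List.countP_congr fun j hj => ?_
    rw [List.mem_range] at hj
    rw [List.getD_append _ _ _ _ hj, List.take_append_of_le_length (by omega)]
  · refine List.countP_congr fun j _ => ?_
    have hget : (A ++ B).getD (A.length + j) true = B.getD j true := by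
      rw [List.getD_append_right _ _ _ _ (Nat.le_add_right _ _), Nat.add_sub_cancel_left]
    have htake : (A ++ B).take (A.length + j + 1) = A ++ B.take (j + 1) := by
      rw [List.take_append, List.take_of_length_le (by omega), Nat.add_assoc,
        Nat.add_sub_cancel_left]
    simp only [Function.comp_apply, hget, htake, upCount_append]

lemma returns_append {A : List Bool} (hA : 2 * upCount A = A.length) (B : List Bool) :
    returns (A ++ B) = returns A + returns B := by
  rw [returns_append_eq_add_countP, returns_eq_countP B]
  congr 1
  refine List.countP_congr fun j _ => ?_
  simp only [Nat.mul_add, hA, Nat.add_assoc, Nat.add_left_cancel_iff]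

lemma returns_concat (L : List Bool) (b : Bool) :
    returns (L ++ [b]) =
      returns L + if b = false ∧ 2 * upCount (L ++ [b]) = L.length + 1 then 1 else 0 := by
  rw [returns_append_eq_add_countP, upCount_append]
  simp [List.countP_cons]

lemma returns_cons_true_eq_zero {A : List Bool}
    (hA : ∀ i, i ≤ A.length → i ≤ 2 * upCount (A.take i)) : returns (true :: A) = 0 := by
  refine (returns_eq_countP _).trans (List.countP_eq_zero.mpr fun j hj => ?_)
  have := hA j (by simpa [Nat.lt_succ_iff] using hj)
  simp only [List.take_succ_cons, upCount_eq_count_true, List.count_cons_self,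
    decide_eq_true_eq] at this ⊢
  omega

lemma returns_arch {n : ℕ} {A : List Bool} (hA : IsDyck n A) :
    returns (true :: A ++ [false]) = 1 := by
  have hbal := hA.two_mul_upCount
  have hreturn : 2 * upCount (true :: A ++ [false]) = (true :: A).length + 1 := by
    grind [upCount_eq_count_true]
  rw [returns_concat, returns_cons_true_eq_zero hA.2.2, if_pos ⟨rfl, hreturn⟩]

def DyckStep.equivBool : DyckStep ≃ Bool where
  toFun
    | U => true
    | D => false
  invFun b := if b then U else D
  left_inv s := by cases s <;> rfl
  right_inv b := by cases b <;> rfl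

lemma DyckStep.count_map_equivBool_true (l : List DyckStep) :
    (l.map equivBool).count true = l.count U :=
  List.count_map_of_injective l _ equivBool.injective U

lemma DyckStep.count_map_equivBool_false (l : List DyckStep) :
    (l.map equivBool).count false = l.count D :=
  List.count_map_of_injective l _ equivBool.injective D

namespace DyckWord

def toBools (p : DyckWord) : List Bool := p.toList.map equivBool

lemma toBools_injective : Function.Injective toBools := fun _ _ h =>
  DyckWord.ext (List.map_injective_iff.mpr equivBool.injective h)

lemma toBools_add (p q : DyckWord) : (p + q).toBools = p.toBools ++ q.toBools :=
  List.map_append ..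

lemma toBools_nest (p : DyckWord) : p.nest.toBools = true :: p.toBools ++ [false] := by
  simp only [toBools, nest, List.cons_append, List.nil_append, List.map_cons, List.map_append,
    List.map_nil]
  rfl

lemma isDyck_toBools (p : DyckWord) : IsDyck p.semilength p.toBools := by
  simp only [isDyck_iff_count, toBools, ← List.map_take, count_map_equivBool_true,
    count_map_equivBool_false]
  exact ⟨rfl, p.semilength_eq_count_D.symm, p.count_D_le_count_U⟩

end DyckWord

lemma isDyck_iff_exists_dyckWord {n : ℕ} {L : List Bool} :
    IsDyck n L ↔ ∃ p : DyckWord, p.semilength = n ∧ p.toBools = L := by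
  refine ⟨fun h => ?_, fun ⟨p, hn, hL⟩ => hn ▸ hL ▸ p.isDyck_toBools⟩
  obtain ⟨hU, hD, hpre⟩ := (isDyck_iff_count n L).mp h
  set l := L.map equivBool.symm
  have hl : l.map equivBool = L := by simp [l]
  simp only [← hl, ← List.map_take, count_map_equivBool_true, count_map_equivBool_false] at hU hD hpre
  exact ⟨⟨l, hU.trans hD.symm, hpre⟩, hU, hl⟩

namespace DyckWord

lemma nest_add_ne_zero (p q : DyckWord) : p.nest + q ≠ 0 := fun h => by
  simpa using congrArg semilength h

lemma returns_toBools_nest_add (p q : DyckWord) :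
    returns (p.nest + q).toBools = returns q.toBools + 1 := by
  rw [toBools_add, returns_append p.nest.isDyck_toBools.two_mul_upCount, toBools_nest,
    returns_arch p.isDyck_toBools, add_comm]

def ofArches (ps : List DyckWord) : DyckWord := (ps.map nest).sum

lemma ofArches_nil : ofArches [] = 0 := rfl

lemma ofArches_cons (p : DyckWord) (ps : List DyckWord) :
    ofArches (p :: ps) = p.nest + ofArches ps := by
  simp [ofArches]

lemma semilength_ofArches (ps : List DyckWord) :
    (ofArches ps).semilength = (ps.map semilength).sum + ps.length := by
  induction ps with
  | nil => rfl
  | cons p ps ih =>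
    simp only [ofArches_cons, semilength_add, semilength_nest, ih, List.map_cons, List.sum_cons,
      List.length_cons]
    omega

lemma returns_toBools_ofArches (ps : List DyckWord) : returns (ofArches ps).toBools = ps.length := by
  induction ps with
  | nil => rfl
  | cons p ps ih => rw [ofArches_cons, returns_toBools_nest_add, ih, List.length_cons]

def toArches (p : DyckWord) : List DyckWord :=
  if _ : p = 0 then [] else p.insidePart :: toArches p.outsidePart
termination_by p.semilength
decreasing_by exact semilength_outsidePart_lt ‹_›

lemma ofArches_toArches (p : DyckWord) : ofArches (toArches p) = p := by
  induction p using toArches.induct with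
  | case1 => rw [toArches, dif_pos rfl, ofArches_nil]
  | case2 p h ih => rw [toArches, dif_neg h, ofArches_cons, ih, nest_insidePart_add_outsidePart h]

lemma toArches_ofArches (ps : List DyckWord) : toArches (ofArches ps) = ps := by
  induction ps with
  | nil => rw [ofArches_nil, toArches, dif_pos rfl]
  | cons p ps ih =>
    rw [ofArches_cons, toArches, dif_neg (nest_add_ne_zero p _), insidePart_add nest_ne_zero,
      outsidePart_add nest_ne_zero, insidePart_nest, outsidePart_nest, zero_add, ih]

lemma ofArches_injective : Function.Injective ofArches :=
  Function.LeftInverse.injective toArches_ofArches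

def tuples (k s : ℕ) : Set (List DyckWord) :=
  {ps | ps.length = k ∧ (ps.map semilength).sum = s}

lemma finite_setOf_semilength_eq (n : ℕ) : {p : DyckWord | p.semilength = n}.Finite :=
  Set.finite_coe_iff.mp (inferInstanceAs (Finite {p : DyckWord // p.semilength = n}))

lemma image_ofArches_tuples (k s : ℕ) :
    ofArches '' tuples k s = {p | p.semilength = s + k ∧ returns p.toBools = k} := by
  ext p
  refine ⟨?_, fun ⟨hs, hr⟩ => ⟨toArches p, ?_, ofArches_toArches p⟩⟩
  · rintro ⟨ps, ⟨rfl, rfl⟩, rfl⟩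
    exact ⟨semilength_ofArches ps, returns_toBools_ofArches ps⟩
  · rw [← ofArches_toArches p, returns_toBools_ofArches] at hr
    rw [← ofArches_toArches p, semilength_ofArches, hr] at hs
    exact ⟨hr, by omega⟩

lemma finite_tuples (k s : ℕ) : (tuples k s).Finite :=
  Set.Finite.of_finite_image (by
    rw [image_ofArches_tuples]
    exact (finite_setOf_semilength_eq _).subset fun _ h => h.1) ofArches_injective.injOn

lemma ncard_tuples_zero_right (k : ℕ) : (tuples k 0).ncard = 1 := by
  rw [Set.ncard_eq_one]
  refine ⟨List.replicate k 0, Set.eq_singleton_iff_unique_mem.mpr ⟨by simp [tuples], ?_⟩⟩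
  rintro ps ⟨hl, hs⟩
  refine List.eq_replicate_iff.mpr ⟨hl, fun p hp => ?_⟩
  have : p.semilength = 0 := List.sum_eq_zero_iff.mp hs _ (List.mem_map_of_mem hp)
  rw [← toList_eq_nil, ← List.length_eq_zero_iff, ← two_mul_semilength_eq_length, this]

lemma tuples_zero_succ (s : ℕ) : tuples 0 (s + 1) = ∅ := by
  ext ps
  simp +contextual [tuples, List.length_eq_zero_iff]

def mergeHead : List DyckWord → List DyckWord
  | p :: q :: ps => (p.nest + q) :: ps
  | ps => ps

def splitHead : List DyckWord → List DyckWord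
  | p :: ps => p.insidePart :: p.outsidePart :: ps
  | [] => []

lemma leftInvOn_splitHead_mergeHead (k s : ℕ) :
    Set.LeftInvOn splitHead mergeHead (tuples (k + 2) s) := by
  rintro (_ | ⟨p, _ | ⟨q, ps⟩⟩) ⟨hl, -⟩
  · simp at hl
  · simp at hl
  · simp [mergeHead, splitHead]

lemma tuples_succ_succ (k s : ℕ) :
    tuples (k + 1) (s + 1) = List.cons 0 '' tuples k (s + 1) ∪ mergeHead '' tuples (k + 2) s := by
  ext ps
  constructor
  · rintro ⟨hl, hs⟩
    obtain ⟨p, ps, rfl⟩ := List.exists_cons_of_length_eq_add_one hl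
    by_cases hp : p = 0
    · subst hp
      exact .inl ⟨ps, ⟨by simpa using hl, by simpa using hs⟩, rfl⟩
    · refine .inr ⟨p.insidePart :: p.outsidePart :: ps, ⟨by simpa using hl, ?_⟩,
        by rw [mergeHead, nest_insidePart_add_outsidePart hp]⟩
      have := semilength_insidePart_add_semilength_outsidePart_add_one hp
      simp only [List.map_cons, List.sum_cons] at hs ⊢
      omega
  · rintro (⟨ps, ⟨hl, hs⟩, rfl⟩ | ⟨_ | ⟨p, _ | ⟨q, ps⟩⟩, ⟨hl, hs⟩, rfl⟩)
    · exact ⟨by simp [hl], by simpa using hs⟩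
    · simp at hl
    · simp at hl
    · simp only [List.length_cons, List.map_cons, List.sum_cons] at hl hs
      refine ⟨by simp only [mergeHead, List.length_cons]; omega, ?_⟩
      simp only [mergeHead, List.map_cons, List.sum_cons, semilength_add, semilength_nest]
      omega

lemma ncard_tuples_succ_succ (k s : ℕ) :
    (tuples (k + 1) (s + 1)).ncard = (tuples k (s + 1)).ncard + (tuples (k + 2) s).ncard := by
  have hdisj : Disjoint (List.cons 0 '' tuples k (s + 1)) (mergeHead '' tuples (k + 2) s) := by
    refine Set.disjoint_left.mpr ?_
    rintro _ ⟨ps, -, rfl⟩ ⟨_ | ⟨p, _ | ⟨q, qs⟩⟩, ⟨hl, -⟩, h⟩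
    · simp at hl
    · simp at hl
    · exact nest_add_ne_zero p q (List.cons_eq_cons.mp h).1
  rw [tuples_succ_succ, Set.ncard_union_eq hdisj ((finite_tuples _ _).image _)
    ((finite_tuples _ _).image _), Set.ncard_image_of_injective _ List.cons_injective,
    (leftInvOn_splitHead_mergeHead k s).injOn.ncard_image]

lemma ncard_tuples_add_choose : ∀ s k : ℕ,
    (tuples (k + 1) s).ncard + (2 * s + k).choose (s + k + 1) = (2 * s + k).choose s
  | 0, k => by simp [ncard_tuples_zero_right]
  | s + 1, k => by
    have hprev : (tuples k (s + 1)).ncard + (2 * s + k + 1).choose (s + k + 1) =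
        (2 * s + k + 1).choose (s + 1) := by
      cases k with
      | zero => simp [tuples_zero_succ]
      | succ k =>
        rw [show 2 * s + (k + 1) + 1 = 2 * (s + 1) + k by ring,
          show s + (k + 1) + 1 = s + 1 + k + 1 by ring]
        exact ncard_tuples_add_choose (s + 1) k
    have hnext : (tuples (k + 2) s).ncard + (2 * s + k + 1).choose (s + k + 1 + 1) =
        (2 * s + k + 1).choose s :=
      ncard_tuples_add_choose s (k + 1)
    rw [ncard_tuples_succ_succ, show 2 * (s + 1) + k = 2 * s + k + 1 + 1 by ring,
      show s + 1 + k + 1 = s + k + 1 + 1 by ring, Nat.choose_succ_succ' _ s,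
      Nat.choose_succ_succ' _ (s + k + 1)]
    omega

lemma mul_ncard_tuples (k s : ℕ) :
    (s + k + 1) * (tuples (k + 1) s).ncard = (k + 1) * (2 * s + k).choose (s + k) := by
  have hsum := ncard_tuples_add_choose s k
  rw [Nat.choose_symm_of_eq_add (show 2 * s + k = s + (s + k) by ring)] at hsum
  have hstep := Nat.choose_succ_right_eq (2 * s + k) (s + k)
  rw [show 2 * s + k - (s + k) = s by omega] at hstep
  zify at hsum hstep ⊢
  linear_combination (s + k + 1 : ℤ) * hsum - hstep

lemma setOf_isDyck_returns_eq_image (k s : ℕ) :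
    {L : List Bool | IsDyck (s + k) L ∧ returns L = k} = (toBools ∘ ofArches) '' tuples k s := by
  rw [Set.image_comp, image_ofArches_tuples]
  ext L
  simp only [Set.mem_ofPred_eq, Set.mem_image, isDyck_iff_exists_dyckWord]
  constructor
  · rintro ⟨⟨p, hs, rfl⟩, hr⟩
    exact ⟨p, ⟨hs, hr⟩, rfl⟩
  · rintro ⟨p, ⟨hs, hr⟩, rfl⟩
    exact ⟨⟨p, hs, rfl⟩, hr⟩

end DyckWord

theorem stmt7 (n k : ℕ) (hk : 1 ≤ k) (hkn : k ≤ n) :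
    n * {L : List Bool | IsDyck n L ∧ returns L = k}.ncard =
      k * Nat.choose (2 * n - k - 1) (n - 1) := by
  obtain ⟨k, rfl⟩ := Nat.exists_eq_add_of_le' hk
  obtain ⟨s, rfl⟩ := Nat.exists_eq_add_of_le' hkn
  rw [DyckWord.setOf_isDyck_returns_eq_image, Set.ncard_image_of_injective _
      (DyckWord.toBools_injective.comp DyckWord.ofArches_injective),
    show 2 * (s + (k + 1)) - (k + 1) - 1 = 2 * s + k by omega,
    show s + (k + 1) - 1 = s + k by omega, ← DyckWord.mul_ncard_tuples]
  ring
end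

section
/- For integers n ≥ 2 and 1 ≤ t ≤ n-1, let A_{n,t} denote the set of inversion sequences e of length n avoiding 102 and 120 with rank t such that e_{max(e)+t} < max(e). Then |A_{n+1,t}| = Σ_{i=t-1}^{n-2} |A_{n,i}|. -/
/-- The set $A_{n,t}$ of (102,120)-avoiding inversion sequences of length n with
rank t such that the entry at position max(e)+t is less than max(e). -/
def Aset (n t : ℕ) : Set (ℕ → ℕ) :=
  {e | IsInvSeq n e ∧ ¬ Contains n Pat102 e ∧ ¬ Contains n Pat120 e ∧
    HasRank n e t ∧ ∃ m, IsMaxVal n e m ∧ e (m + t) < m}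

/-!
Every `e ∈ A_{n,t}` with maximum `m` is a weakly increasing prefix whose first descent is at
position `m + t + 1`, where the maximum sits, followed by a tail with values in `[e_{m+t}, m]`
that avoids 102 and 120. Split `A_{n+1,t}` according to whether the two entries just before the
maximum are equal. If they are, deleting one of them is a bijection onto `A_{n,t-1}`; otherwise
lowering every entry from position `m + t` on by one is a bijection onto `A_{n+1,t+1}`. Hence
`|A_{n+1,t}| = |A_{n+1,t+1}| + |A_{n,t-1}|`, which telescopes into the sum since `A_{n+1,t}` is
empty for `t ≥ n`.
-/

lemma finite_setOf_isInvSeq (n : ℕ) : {e | IsInvSeq n e}.Finite := by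
  refine (Set.finite_range fun (f : Fin (n + 1) → Fin (n + 1)) (i : ℕ) =>
    if hi : i < n + 1 then (f ⟨i, hi⟩ : ℕ) else 0).subset fun e ⟨h0, hlt, hz⟩ => ?_
  have hle : ∀ i, e i < n + 1 := by
    intro i
    rcases Nat.eq_zero_or_pos i with rfl | hi
    · omega
    rcases le_or_gt i n with hin | hin
    · have := hlt i hi hin
      omega
    · rw [hz i hin]
      omega
  refine ⟨fun i => ⟨e i, hle i⟩, funext fun i => ?_⟩
  dsimp only
  split_ifs with hi
  · rfl
  · exact (hz i (by omega)).symm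

/-- The shape of the members of `A_{n,t}` with maximum `m`, for `p = m + t`: a weakly increasing
prefix ending with the maximum at the first descent `p + 1`, then a tail with values in
`[e p, m]` avoiding 102 and 120. -/
structure PeakShape (n m p : ℕ) (e : ℕ → ℕ) : Prop where
  succ_le : p + 1 ≤ n
  zero : e 0 = 0
  eq_zero : ∀ i, n < i → e i = 0
  lt_self : ∀ i, 1 ≤ i → i ≤ p + 1 → e i < i
  mono : ∀ i j, i ≤ j → j ≤ p + 1 → e i ≤ e j
  peak : e (p + 1) = m
  before_peak : e p < m
  tail_ge : ∀ i, p + 1 < i → i ≤ n → e p ≤ e i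
  tail_le : ∀ i, p + 1 < i → i ≤ n → e i ≤ m
  descent : p + 2 ≤ n → e (p + 2) < m
  tail_avoids : ∀ i j k, p + 1 < i → i < j → j < k → k ≤ n →
    ¬ Pat102 (e i) (e j) (e k) ∧ ¬ Pat120 (e i) (e j) (e k)

namespace PeakShape

variable {n m p : ℕ} {e : ℕ → ℕ}

lemma le_max (h : PeakShape n m p e) (i : ℕ) (hi : i ≤ n) : e i ≤ m := by
  rcases le_or_gt i (p + 1) with hip | hip
  · exact h.peak ▸ h.mono i (p + 1) hip le_rfl
  · exact h.tail_le i hip hi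

lemma le_of_le (h : PeakShape n m p e) {i j : ℕ} (hi : i ≤ p) (hij : i ≤ j) (hj : j ≤ n) :
    e i ≤ e j := by
  rcases le_or_gt j (p + 1) with hjp | hjp
  · exact h.mono i j hij hjp
  · exact (h.mono i p hi (by omega)).trans (h.tail_ge j hjp hj)

lemma isInvSeq (h : PeakShape n m p e) : IsInvSeq n e := by
  refine ⟨h.zero, fun i hi hin => ?_, h.eq_zero⟩
  rcases le_or_gt i (p + 1) with hip | hip
  · exact h.lt_self i hi hip
  · have hm : m < p + 1 := h.peak ▸ h.lt_self (p + 1) (by omega) le_rfl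
    have := h.le_max i hin
    omega

lemma prMax (h : PeakShape n m p e) : PrMax n e (p + 1) := by
  refine ⟨by omega, h.succ_le, fun i _ hi => h.mono i (i + 1) (by omega) (by omega), ?_⟩
  rcases eq_or_lt_of_le h.succ_le with hn | hn
  · exact Or.inl hn
  · exact Or.inr (h.peak ▸ h.descent hn)

lemma not_contains_102 (h : PeakShape n m p e) : ¬ Contains n Pat102 e := by
  rintro ⟨i, j, k, -, hij, hjk, hkn, hpat⟩
  unfold Pat102 at hpat
  rcases lt_trichotomy i (p + 1) with hi | rfl | hi
  · have := h.le_of_le (by omega : i ≤ p) hij.le (by omega : j ≤ n)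
    omega
  · have := h.le_max k hkn
    have := h.peak
    omega
  · exact (h.tail_avoids i j k hi hij hjk hkn).1 hpat

lemma not_contains_120 (h : PeakShape n m p e) : ¬ Contains n Pat120 e := by
  rintro ⟨i, j, k, -, hij, hjk, hkn, hpat⟩
  unfold Pat120 at hpat
  rcases lt_trichotomy i (p + 1) with hi | rfl | hi
  · have := h.le_of_le (by omega : i ≤ p) (by omega : i ≤ k) hkn
    omega
  · have := h.le_max j (by omega)
    have := h.peak
    omega
  · exact (h.tail_avoids i j k hi hij hjk hkn).2 hpat

lemma mem_Aset {t : ℕ} (h : PeakShape n m p e) (hp : p = m + t) : e ∈ Aset n t := by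
  subst hp
  refine ⟨h.isInvSeq, h.not_contains_102, h.not_contains_120,
    ⟨m + t + 1, h.prMax, by rw [h.peak]⟩, m, ⟨?_, m + t + 1, by omega, h.succ_le, h.peak⟩,
    h.before_peak⟩
  exact fun i _ hi => h.le_max i hi

end PeakShape

lemma PrMax.mono {n P : ℕ} {e : ℕ → ℕ} (h : PrMax n e P) {i j : ℕ} (hi : 1 ≤ i) (hij : i ≤ j)
    (hj : j ≤ P) : e i ≤ e j := by
  induction j, hij using Nat.le_induction with
  | base => exact le_rfl
  | succ j hij ih => exact (ih (by omega)).trans (h.2.2.1 j (by omega) (by omega))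

lemma exists_peakShape_of_mem_Aset {n t : ℕ} {e : ℕ → ℕ} (he : e ∈ Aset n t) :
    ∃ m, PeakShape n m (m + t) e := by
  obtain ⟨⟨h0, hlt, hbig⟩, h102, h120, ⟨P, hP, hPt⟩, m, ⟨hmax, q, hq1, hqn, hqm⟩, hbefore⟩ := he
  obtain ⟨hP1, hPn, -, hdesc⟩ := id hP
  have peak : e P = m := by
    refine le_antisymm (hmax P hP1 hPn) ?_
    rcases le_or_gt q P with hqP | hqP
    · exact hqm ▸ hP.mono hq1 hqP le_rfl
    · by_contra! hPm
      have hdesc : e (P + 1) < e P := hdesc.resolve_left (by omega)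
      rcases eq_or_lt_of_le (show P + 1 ≤ q by omega) with rfl | hq
      · omega
      · exact h102 ⟨P, P + 1, q, hP1, by omega, hq, hqn, hdesc, hqm ▸ hPm⟩
  obtain rfl : P = m + t + 1 := by omega
  have mono : ∀ i j, i ≤ j → j ≤ m + t + 1 → e i ≤ e j := by
    intro i j hij hj
    rcases Nat.eq_zero_or_pos i with rfl | hi
    · rw [h0]; exact Nat.zero_le _
    · exact hP.mono hi hij hj
  refine ⟨m, hPn, h0, hbig, fun i hi hiP => hlt i hi (by omega), mono, peak, hbefore,
    fun i hi hin => ?_, fun i hi hin => hmax i (by omega) hin, fun hn => ?_,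
    fun i j k hi hij hjk hkn => ⟨fun hpat => h102 ⟨i, j, k, by omega, hij, hjk, hkn, hpat⟩,
      fun hpat => h120 ⟨i, j, k, by omega, hij, hjk, hkn, hpat⟩⟩⟩
  · by_contra! hlow
    exact h120 ⟨m + t, m + t + 1, i, by omega, by omega, hi, hin, hlow, by omega⟩
  · have := hdesc.resolve_left (by omega)
    rwa [peak] at this

lemma mem_Aset_iff {n t : ℕ} {e : ℕ → ℕ} : e ∈ Aset n t ↔ ∃ m, PeakShape n m (m + t) e :=
  ⟨exists_peakShape_of_mem_Aset, fun ⟨_, h⟩ => h.mem_Aset rfl⟩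

noncomputable def firstDescent (e : ℕ → ℕ) : ℕ := sInf {i | e (i + 1) < e i}

lemma PeakShape.firstDescent_eq {n m p : ℕ} {e : ℕ → ℕ} (h : PeakShape n m p e) :
    firstDescent e = p + 1 := by
  have hdesc : e (p + 2) < e (p + 1) := by
    rcases eq_or_lt_of_le h.succ_le with hn | hn
    · rw [h.eq_zero _ (by omega), h.peak]
      exact Nat.zero_lt_of_lt h.before_peak
    · exact h.peak ▸ h.descent hn
  refine le_antisymm (Nat.sInf_le hdesc) (le_csInf ⟨_, hdesc⟩ fun i hi => ?_)
  by_contra! hip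
  exact absurd hi (not_lt.2 (h.mono i (i + 1) (by omega) (by omega)))

def lowerFrom (k : ℕ) (e : ℕ → ℕ) (i : ℕ) : ℕ := if i < k then e i else e i - 1

def raiseFrom (n k : ℕ) (e : ℕ → ℕ) (i : ℕ) : ℕ := if i < k ∨ n < i then e i else e i + 1

def eraseAt (k : ℕ) (e : ℕ → ℕ) (i : ℕ) : ℕ := if i < k then e i else e (i + 1)

def dupAt (k : ℕ) (e : ℕ → ℕ) (i : ℕ) : ℕ := if i ≤ k then e i else e (i - 1)

namespace PeakShape

variable {n m p : ℕ} {e : ℕ → ℕ}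

lemma lowerFrom (h : PeakShape n m p e) (hlt : e (p - 1) < e p) :
    PeakShape n (m - 1) p (lowerFrom p e) := by
  have hp : 1 ≤ p := by
    by_contra! hp
    simp [show p = 0 by omega] at hlt
  have hpeak := h.peak
  have hbefore := h.before_peak
  have hn := h.succ_le
  refine ⟨hn, ?_, fun i hi => ?_, fun i hi hip => ?_, fun i j hij hj => ?_, ?_, ?_,
    fun i hi hin => ?_, fun i hi hin => ?_, fun hn => ?_, fun i j k hi hij hjk hkn => ?_⟩ <;>
    simp (disch := omega) only [_root_.lowerFrom, if_pos, if_neg]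
  · exact h.zero
  · simp [h.eq_zero i hi]
  · have := h.lt_self i hi hip
    split_ifs <;> omega
  · have := h.mono i j hij hj
    split_ifs
    · exact this
    · have := h.mono i (p - 1) (by omega) (by omega)
      have := h.mono p j (by omega) hj
      omega
    · omega
    · omega
  · omega
  · omega
  · have := h.tail_ge i hi hin
    omega
  · have := h.tail_le i hi hin
    omega
  · have := h.descent hn
    have := h.tail_ge (p + 2) (by omega) hn
    omega
  · have := h.tail_avoids i j k hi hij hjk hkn
    have := h.tail_ge i hi (by omega)
    have := h.tail_ge j (by omega) (by omega)
    have := h.tail_ge k (by omega) hkn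
    unfold Pat102 Pat120 at *
    omega

lemma raiseFrom (h : PeakShape n m p e) (hmp : m < p) :
    PeakShape n (m + 1) p (raiseFrom n p e) := by
  have hpeak := h.peak
  have hbefore := h.before_peak
  have hn := h.succ_le
  refine ⟨hn, ?_, fun i hi => ?_, fun i hi hip => ?_, fun i j hij hj => ?_, ?_, ?_,
    fun i hi hin => ?_, fun i hi hin => ?_, fun hn => ?_, fun i j k hi hij hjk hkn => ?_⟩ <;>
    simp (disch := omega) only [_root_.raiseFrom, if_pos, if_neg]
  · exact h.zero
  · exact h.eq_zero i hi
  · obtain hi' | rfl | rfl : i < p ∨ i = p ∨ i = p + 1 := by omega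
    · simpa (disch := omega) only [if_pos] using h.lt_self i hi hip
    all_goals simp (disch := omega) only [if_neg]; omega
  · have := h.mono i j hij hj
    split_ifs <;> omega
  · omega
  · omega
  · have := h.tail_ge i hi hin
    omega
  · have := h.tail_le i hi hin
    omega
  · have := h.descent hn
    omega
  · have := h.tail_avoids i j k hi hij hjk hkn
    unfold Pat102 Pat120 at *
    omega

lemma eraseAt (h : PeakShape (n + 1) m (p + 1) e) (hflat : e p = e (p + 1)) (hmp : m ≤ p) :
    PeakShape n m p (eraseAt (p + 1) e) := by
  have hpeak := h.peak
  have hbefore := h.before_peak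
  have hn := h.succ_le
  refine ⟨by omega, ?_, fun i hi => ?_, fun i hi hip => ?_, fun i j hij hj => ?_, ?_, ?_,
    fun i hi hin => ?_, fun i hi hin => ?_, fun hn => ?_, fun i j k hi hij hjk hkn => ?_⟩ <;>
    simp (disch := omega) only [_root_.eraseAt, if_pos, if_neg]
  · exact h.zero
  · exact h.eq_zero (i + 1) (by omega)
  · rcases Nat.lt_or_ge i (p + 1) with hi' | hi'
    · simpa (disch := omega) only [if_pos] using h.lt_self i hi (by omega)
    · obtain rfl : i = p + 1 := by omega
      simp (disch := omega) only [if_neg]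
      omega
  · split_ifs <;> exact h.mono _ _ (by omega) (by omega)
  · exact hpeak
  · omega
  · have := h.tail_ge (i + 1) (by omega) (by omega)
    omega
  · exact h.tail_le (i + 1) (by omega) (by omega)
  · exact h.descent (by omega)
  · exact h.tail_avoids (i + 1) (j + 1) (k + 1) (by omega) (by omega) (by omega) (by omega)

lemma dupAt (h : PeakShape n m p e) : PeakShape (n + 1) m (p + 1) (dupAt p e) := by
  have hpeak := h.peak
  have hbefore := h.before_peak
  have hn := h.succ_le
  have hm := h.lt_self (p + 1) (by omega) le_rfl
  refine ⟨by omega, ?_, fun i hi => ?_, fun i hi hip => ?_, fun i j hij hj => ?_, ?_, ?_,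
    fun i hi hin => ?_, fun i hi hin => ?_, fun hn => ?_, fun i j k hi hij hjk hkn => ?_⟩ <;>
    simp (disch := omega) only [_root_.dupAt, if_pos, if_neg]
  · exact h.zero
  · exact h.eq_zero (i - 1) (by omega)
  · obtain hi' | rfl | rfl : i ≤ p ∨ i = p + 1 ∨ i = p + 2 := by omega
    · simpa (disch := omega) only [if_pos] using h.lt_self i hi (by omega)
    all_goals simp (disch := omega) only [if_neg, Nat.add_sub_cancel,
      show p + 2 - 1 = p + 1 from rfl]; omega
  · split_ifs <;> exact h.mono _ _ (by omega) (by omega)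
  · exact hpeak
  · exact hbefore
  · exact h.tail_ge (i - 1) (by omega) (by omega)
  · exact h.tail_le (i - 1) (by omega) (by omega)
  · exact h.descent (by omega)
  · exact h.tail_avoids (i - 1) (j - 1) (k - 1) (by omega) (by omega) (by omega) (by omega)

end PeakShape

lemma lowerFrom_raiseFrom {n k : ℕ} {e : ℕ → ℕ} (hz : ∀ i, n < i → e i = 0) :
    lowerFrom k (raiseFrom n k e) = e := by
  funext i
  by_cases hi : n < i
  · simp [lowerFrom, raiseFrom, hi, hz i hi]
  · simp only [lowerFrom, raiseFrom, hi, or_false]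
    split_ifs <;> omega

lemma raiseFrom_lowerFrom {n k : ℕ} {e : ℕ → ℕ} (hpos : ∀ i, k ≤ i → i ≤ n → 0 < e i)
    (hz : ∀ i, n < i → e i = 0) : raiseFrom n k (lowerFrom k e) = e := by
  funext i
  by_cases hi : n < i
  · simp [lowerFrom, raiseFrom, hi, hz i hi]
  · simp only [lowerFrom, raiseFrom, hi, or_false]
    split_ifs with hk
    · rfl
    · have := hpos i (by omega) (by omega)
      omega

lemma eraseAt_dupAt (k : ℕ) (e : ℕ → ℕ) : eraseAt (k + 1) (dupAt k e) = e := by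
  funext i
  simp only [eraseAt, dupAt]
  split_ifs <;> first | rfl | omega

lemma dupAt_eraseAt {k : ℕ} {e : ℕ → ℕ} (h : e k = e (k + 1)) :
    dupAt k (eraseAt (k + 1) e) = e := by
  funext i
  simp only [eraseAt, dupAt]
  split_ifs with h1 h2 h3
  · rfl
  · omega
  · obtain rfl : i = k + 1 := by omega
    exact h
  · congr 1
    omega

def IsFlatBeforeDescent (e : ℕ → ℕ) : Prop := e (firstDescent e - 2) = e (firstDescent e - 1)

lemma PeakShape.isFlatBeforeDescent_iff {n m p : ℕ} {e : ℕ → ℕ} (h : PeakShape n m p e) :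
    IsFlatBeforeDescent e ↔ e (p - 1) = e p := by
  rw [IsFlatBeforeDescent, h.firstDescent_eq, Nat.add_sub_cancel, show p + 1 - 2 = p - 1 by omega]

lemma bijOn_lowerFrom (n s : ℕ) :
    Set.BijOn (fun e => lowerFrom (firstDescent e - 1) e)
      (Aset n (s + 1) \ {e | IsFlatBeforeDescent e}) (Aset n (s + 2)) := by
  have lower : ∀ e ∈ Aset n (s + 1) \ {e | IsFlatBeforeDescent e}, ∃ m,
      PeakShape n m (m + (s + 1)) e ∧
        PeakShape n (m - 1) (m + (s + 1)) (lowerFrom (m + (s + 1)) e) ∧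
        ∀ i, m + (s + 1) ≤ i → i ≤ n → 0 < e i := by
    rintro e ⟨he, hflat⟩
    obtain ⟨m, h⟩ := mem_Aset_iff.1 he
    have hlt : e (m + s) < e (m + (s + 1)) :=
      lt_of_le_of_ne (h.mono _ _ (by omega) (by omega)) (h.isFlatBeforeDescent_iff.not.1 hflat)
    exact ⟨m, h, h.lowerFrom hlt, fun i hi hin =>
      lt_of_lt_of_le (Nat.zero_lt_of_lt hlt) (h.le_of_le le_rfl hi hin)⟩
  refine Set.InvOn.bijOn (f' := fun e => raiseFrom n (firstDescent e - 1) e) ⟨?_, ?_⟩ ?_ ?_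
  · intro e he
    obtain ⟨m, h, hl, hpos⟩ := lower e he
    simp only [h.firstDescent_eq, hl.firstDescent_eq, Nat.add_sub_cancel]
    exact raiseFrom_lowerFrom hpos h.eq_zero
  · intro e he
    obtain ⟨m, h⟩ := mem_Aset_iff.1 he
    have hr := h.raiseFrom (by omega)
    simp only [h.firstDescent_eq, hr.firstDescent_eq, Nat.add_sub_cancel]
    exact lowerFrom_raiseFrom h.eq_zero
  · intro e he
    obtain ⟨m, h, hl, -⟩ := lower e he
    have := h.before_peak
    simp only [h.firstDescent_eq, Nat.add_sub_cancel]
    exact hl.mem_Aset (by omega)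
  · intro e he
    obtain ⟨m, h⟩ := mem_Aset_iff.1 he
    have hr := h.raiseFrom (by omega)
    simp only [h.firstDescent_eq, Nat.add_sub_cancel]
    refine ⟨hr.mem_Aset (by omega), ?_⟩
    have := h.mono (m + (s + 1)) (m + (s + 2)) (by omega) (by omega)
    have := h.succ_le
    simp (disch := omega) only [Set.mem_ofPred_eq, hr.isFlatBeforeDescent_iff, _root_.raiseFrom,
      if_pos, if_neg, show m + (s + 2) - 1 = m + (s + 1) by omega]
    omega

lemma bijOn_eraseAt (n s : ℕ) :
    Set.BijOn (fun e => eraseAt (firstDescent e - 1) e)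
      (Aset (n + 1) (s + 1) ∩ {e | IsFlatBeforeDescent e}) (Aset n s) := by
  have erase : ∀ e ∈ Aset (n + 1) (s + 1) ∩ {e | IsFlatBeforeDescent e}, ∃ m,
      PeakShape (n + 1) m (m + s + 1) e ∧ e (m + s) = e (m + s + 1) ∧
        PeakShape n m (m + s) (eraseAt (m + s + 1) e) := by
    rintro e ⟨he, hflat⟩
    obtain ⟨m, h⟩ := mem_Aset_iff.1 he
    replace h : PeakShape (n + 1) m (m + s + 1) e := h
    have hflat' : e (m + s) = e (m + s + 1) := by
      simpa only [Nat.add_sub_cancel] using h.isFlatBeforeDescent_iff.1 hflat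
    exact ⟨m, h, hflat', h.eraseAt hflat' (by omega)⟩
  refine Set.InvOn.bijOn (f' := fun e => dupAt (firstDescent e - 1) e) ⟨?_, ?_⟩ ?_ ?_
  · intro e he
    obtain ⟨m, h, hflat, he'⟩ := erase e he
    simp only [h.firstDescent_eq, he'.firstDescent_eq, Nat.add_sub_cancel]
    exact dupAt_eraseAt hflat
  · intro e he
    obtain ⟨m, h⟩ := mem_Aset_iff.1 he
    simp only [h.firstDescent_eq, h.dupAt.firstDescent_eq, Nat.add_sub_cancel]
    exact eraseAt_dupAt _ _
  · intro e he
    obtain ⟨m, h, -, he'⟩ := erase e he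
    simp only [h.firstDescent_eq, Nat.add_sub_cancel]
    exact he'.mem_Aset rfl
  · intro e he
    obtain ⟨m, h⟩ := mem_Aset_iff.1 he
    simp only [h.firstDescent_eq, Nat.add_sub_cancel]
    refine ⟨h.dupAt.mem_Aset (by omega), ?_⟩
    simp [Set.mem_ofPred_eq, h.dupAt.isFlatBeforeDescent_iff, _root_.dupAt]

lemma Aset_eq_empty {n t : ℕ} (h : n ≤ t + 1) : Aset n t = ∅ := by
  refine Set.eq_empty_of_forall_notMem fun e he => ?_
  obtain ⟨m, hm⟩ := mem_Aset_iff.1 he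
  have := hm.succ_le
  have := hm.before_peak
  omega

lemma ncard_Aset_succ (n s : ℕ) :
    (Aset (n + 1) (s + 1)).ncard = (Aset (n + 1) (s + 2)).ncard + (Aset n s).ncard := by
  rw [← Set.ncard_inter_add_ncard_sdiff_eq_ncard (Aset (n + 1) (s + 1))
    {e | IsFlatBeforeDescent e} ((finite_setOf_isInvSeq _).subset fun e he => he.1),
    (bijOn_lowerFrom _ _).ncard_eq, (bijOn_eraseAt _ _).ncard_eq, add_comm]

lemma ncard_Aset_eq_add_sum (n s d : ℕ) :
    (Aset (n + 1) (s + 1)).ncard =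
      (Aset (n + 1) (s + d + 1)).ncard + ∑ i ∈ Finset.Ico s (s + d), (Aset n i).ncard := by
  induction d with
  | zero => simp
  | succ d ih =>
    rw [ih, ncard_Aset_succ, show s + (d + 1) = s + d + 1 by omega,
      Finset.sum_Ico_succ_top (by omega), show s + d + 1 + 1 = s + d + 2 from rfl]
    ring

theorem stmt9_general (n t : ℕ) (ht1 : 1 ≤ t) :
    (Aset (n + 1) t).ncard = ∑ i ∈ Finset.Icc (t - 1) (n - 2), (Aset n i).ncard := by
  obtain ⟨s, rfl⟩ : ∃ s, t = s + 1 := ⟨t - 1, by omega⟩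
  rw [ncard_Aset_eq_add_sum n s (n + 1), Aset_eq_empty (by omega), Set.ncard_empty, zero_add,
    Nat.add_sub_cancel]
  refine (Finset.sum_subset (fun i hi => ?_) fun i hi hi' => ?_).symm
  · simp only [Finset.mem_Icc, Finset.mem_Ico] at hi ⊢
    omega
  · simp only [Finset.mem_Icc, Finset.mem_Ico] at hi hi'
    rw [Aset_eq_empty (by omega), Set.ncard_empty]

theorem stmt9 (n t : ℕ) (hn : 2 ≤ n) (ht1 : 1 ≤ t) (ht2 : t ≤ n - 1) :
    (Aset (n + 1) t).ncard = ∑ i ∈ Finset.Icc (t - 1) (n - 2), (Aset n i).ncard :=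
  stmt9_general n t ht1
end
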